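/- arXiv:2003.08104 — 3 statements merged into one kernel-verified Lean document; each statement's English description precedes it below -/
import Mathlib

section
/- Let J be the 2×2 rotation matrix with rows (0,-1) and (1,0) and let γ = 1 − 1/√2 (so that γ² − 2γ + 1/2 = 0). For any λ > 0, the operator norm of the matrix A_λ = (Id + γλJ)⁻²(Id + (2γ−1)λJ) equals 1/√(1 + γ⁴λ⁴/(1 + 2γ²λ²)), and in particular is strictly less than 1. -/
/-!
Matrices `a • 1 + b • J` are the matrices of the multiplications `w ↦ (a + b i) w` on `ℂ` in the
basis `1, i`. Hence, with `c = γλ` and `d = (2γ−1)λ`, the matrix `A_λ` represents multiplication by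
`(1 + d i) / (1 + c i)²`, and its Euclidean operator norm is the modulus `√(1 + d²) / (1 + c²)`.
The relation `γ² − 2γ + 1/2 = 0` says exactly that `d² = 2c²`, which turns this modulus into
`1 / √(1 + c⁴ / (1 + 2c²))`.
-/

open Complex Matrix

theorem Matrix.inv_map_eq_map_inv {K F n R : Type*} [GroupWithZero K] [Fintype n]
    [DecidableEq n] [CommRing R] [FunLike F K (Matrix n n R)] [MonoidHomClass F K (Matrix n n R)]
    (f : F) {z : K} (hz : z ≠ 0) : (f z)⁻¹ = f z⁻¹ :=
  inv_eq_right_inv (by rw [← map_mul, mul_inv_cancel₀ hz, map_one])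

theorem Algebra.leftMulMatrix_complex_one_add_mul_I (r : ℝ) :
    Algebra.leftMulMatrix basisOneI (1 + r * I) = 1 + r • !![0, -1; 1, 0] := by
  rw [Algebra.leftMulMatrix_complex, one_fin_two]
  ext i j
  fin_cases i <;> fin_cases j <;> simp

theorem norm_toEuclideanCLM_leftMulMatrix_complex (z : ℂ) :
    ‖toEuclideanCLM (n := Fin 2) (𝕜 := ℝ) (Algebra.leftMulMatrix basisOneI z)‖ = ‖z‖ := by
  refine ContinuousLinearMap.homothety_norm _ fun x => ?_
  rw [EuclideanSpace.norm_eq, EuclideanSpace.norm_eq, Complex.norm_eq_sqrt_sq_add_sq,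
    ← Real.sqrt_mul (by positivity)]
  congr 1
  simp [Algebra.leftMulMatrix_complex, Fin.sum_univ_two, mulVec, dotProduct]
  ring

theorem Complex.norm_one_add_mul_I (r : ℝ) : ‖1 + r * I‖ = √(1 + r ^ 2) := by
  simpa using Complex.norm_add_mul_I 1 r

theorem Complex.norm_inv_sq_mul_of_sq_eq_two_mul_sq {c d : ℝ} (hcd : d ^ 2 = 2 * c ^ 2) :
    ‖(1 + c * I)⁻¹ ^ 2 * (1 + d * I)‖ = 1 / √(1 + c ^ 4 / (1 + 2 * c ^ 2)) := by
  have hX : 1 + c ^ 4 / (1 + 2 * c ^ 2) = ((1 + c ^ 2) / √(1 + 2 * c ^ 2)) ^ 2 := by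
    rw [div_pow, Real.sq_sqrt (by positivity)]
    field_simp
    ring
  rw [norm_mul, norm_pow, norm_inv, norm_one_add_mul_I, norm_one_add_mul_I, hcd, inv_pow,
    Real.sq_sqrt (by positivity), hX, Real.sqrt_sq (by positivity), one_div_div, inv_mul_eq_div]

theorem sq_sub_two_mul_add_half_eq_zero {γ : ℝ} (hγ : γ = 1 - 1 / √2) :
    γ ^ 2 - 2 * γ + 1 / 2 = 0 := by
  have hs : √2 ^ 2 = 2 := Real.sq_sqrt zero_le_two
  rw [hγ]
  field_simp
  linear_combination -hs

/-- With `γ = 1 − 1/√2` and `λ > 0`, the operator norm of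
`A_λ = (Id + γλJ)⁻²(Id + (2γ−1)λJ)` equals `1/√(1 + γ⁴λ⁴/(1 + 2γ²λ²))` and is `< 1`. -/
theorem stmt4 (l : ℝ) (hl : 0 < l)
    (J : Matrix (Fin 2) (Fin 2) ℝ) (hJ : J = !![0, -1; 1, 0])
    (γ : ℝ) (hγ : γ = 1 - 1 / Real.sqrt 2) :
    ‖Matrix.toEuclideanCLM (n := Fin 2) (𝕜 := ℝ)
        (((1 + (γ * l) • J)⁻¹) ^ 2 * (1 + ((2 * γ - 1) * l) • J))‖
      = 1 / Real.sqrt (1 + γ ^ 4 * l ^ 4 / (1 + 2 * γ ^ 2 * l ^ 2)) ∧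
    ‖Matrix.toEuclideanCLM (n := Fin 2) (𝕜 := ℝ)
        (((1 + (γ * l) • J)⁻¹) ^ 2 * (1 + ((2 * γ - 1) * l) • J))‖ < 1 := by
  have hquad := sq_sub_two_mul_add_half_eq_zero hγ
  have hγ0 : γ ≠ 0 := by rintro rfl; norm_num at hquad
  have hcd : ((2 * γ - 1) * l) ^ 2 = 2 * (γ * l) ^ 2 := by
    linear_combination 2 * l ^ 2 * hquad
  have hunit : 1 + (γ * l : ℝ) * I ≠ 0 := fun h => by simpa using congrArg re h
  have hA : ((1 + (γ * l) • J)⁻¹) ^ 2 * (1 + ((2 * γ - 1) * l) • J) =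
      Algebra.leftMulMatrix basisOneI
        ((1 + (γ * l : ℝ) * I)⁻¹ ^ 2 * (1 + ((2 * γ - 1) * l : ℝ) * I)) := by
    rw [map_mul, map_pow, ← Matrix.inv_map_eq_map_inv _ hunit,
      Algebra.leftMulMatrix_complex_one_add_mul_I, Algebra.leftMulMatrix_complex_one_add_mul_I, hJ]
  have hnorm : ‖toEuclideanCLM (n := Fin 2) (𝕜 := ℝ)
      (((1 + (γ * l) • J)⁻¹) ^ 2 * (1 + ((2 * γ - 1) * l) • J))‖
      = 1 / √(1 + γ ^ 4 * l ^ 4 / (1 + 2 * γ ^ 2 * l ^ 2)) := by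
    rw [hA, norm_toEuclideanCLM_leftMulMatrix_complex,
      Complex.norm_inv_sq_mul_of_sq_eq_two_mul_sq hcd, mul_pow, mul_pow, mul_assoc]
  refine ⟨hnorm, hnorm ▸ ?_⟩
  have hpos : 0 < γ ^ 4 * l ^ 4 / (1 + 2 * γ ^ 2 * l ^ 2) := by positivity
  rw [div_lt_one (by positivity), Real.lt_sqrt zero_le_one]
  linarith
end

section
/- A priori bound for characteristics (continuous level): let E : ℝ × ℝ² → ℝ² be C¹ with ‖E‖ ≤ K₀, ‖∂ₜE‖ ≤ K_t, ‖DₓE‖ ≤ K_x globally. Let ε > 0 and (x_ε, v_ε) solve ε x_ε' = v_ε, ε v_ε' = E(t, x_ε) − v_ε^⊥/ε on [0,∞), where v^⊥ = (−v₂, v₁). Define z_ε(t) = v_ε(t) + ε E^⊥(t, x_ε(t)). Then for all t ≥ 0, ‖z_ε(t)‖ ≤ e^{K_x t}(‖v_ε(0)‖ + ε K₀) + ε t e^{K_x t}(K_t + K_x K₀), and ‖v_ε(t)‖ ≤ ‖z_ε(t)‖ + K₀ ε. -/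
/-- Rotation by π/2 on Euclidean `ℝ²`: `(a,b)^⊥ = (−b,a)`. -/
noncomputable def perp (v : EuclideanSpace ℝ (Fin 2)) : EuclideanSpace ℝ (Fin 2) :=
  WithLp.toLp 2 ![-(v 1), v 0]

/-! With `z = v + ε E^⊥(t, x)` the singular forcing `E/ε` cancels, leaving
`z' = -ε⁻² z^⊥ + r` with `r = ε (∂ₜE + DₓE (v/ε))^⊥`; since `v = z - ε E^⊥`,
`‖r‖ ≤ Kₓ‖z‖ + ε(Kₜ + KₓK₀)`. The fast term `-ε⁻² z^⊥` is a rotation, so in the frame rotating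
at angular speed `ε⁻²` it disappears without changing norms, and Grönwall's inequality there
gives a bound that does not see `ε⁻²`. -/

open Real

local notation "ℝ²" => EuclideanSpace ℝ (Fin 2)

@[simp] lemma perp_apply_zero (v : ℝ²) : perp v 0 = -v 1 := rfl

@[simp] lemma perp_apply_one (v : ℝ²) : perp v 1 = v 0 := rfl

lemma norm_cos_smul_add_sin_smul_perp (θ : ℝ) (u : ℝ²) :
    ‖cos θ • u + sin θ • perp u‖ = ‖u‖ := by
  simp only [EuclideanSpace.norm_eq, Fin.sum_univ_two, PiLp.add_apply, PiLp.smul_apply,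
    smul_eq_mul, perp_apply_zero, perp_apply_one, Real.norm_eq_abs, sq_abs]
  congr 1
  linear_combination (u 0 ^ 2 + u 1 ^ 2) * cos_sq_add_sin_sq θ

lemma norm_perp (u : ℝ²) : ‖perp u‖ = ‖u‖ := by
  simpa using norm_cos_smul_add_sin_smul_perp (π / 2) u

noncomputable def perpₗᵢ : ℝ² →ₗᵢ[ℝ] ℝ² where
  toFun := perp
  map_add' u v := by ext i; fin_cases i <;> simp [add_comm]
  map_smul' c u := by ext i; fin_cases i <;> simp
  norm_map' := norm_perp

lemma perp_add (u v : ℝ²) : perp (u + v) = perp u + perp v := perpₗᵢ.map_add u v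

lemma perp_smul (c : ℝ) (u : ℝ²) : perp (c • u) = c • perp u := perpₗᵢ.map_smul c u

lemma perp_neg (u : ℝ²) : perp (-u) = -perp u := perpₗᵢ.map_neg u

lemma perp_perp (u : ℝ²) : perp (perp u) = -u := by
  ext i; fin_cases i <;> simp

lemma HasDerivAt.perp {f : ℝ → ℝ²} {f' : ℝ²} {t : ℝ} (hf : HasDerivAt f f' t) :
    HasDerivAt (fun s => _root_.perp (f s)) (_root_.perp f') t :=
  perpₗᵢ.toContinuousLinearMap.hasFDerivAt.comp_hasDerivAt t hf

lemma hasDerivAt_cos_smul_add_sin_smul_perp {z r : ℝ → ℝ²} {k t : ℝ}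
    (hz : HasDerivAt z (-(k • perp (z t)) + r t) t) :
    HasDerivAt (fun s => cos (k * s) • z s + sin (k * s) • perp (z s))
      (cos (k * t) • r t + sin (k * t) • perp (r t)) t := by
  have hk : HasDerivAt (fun s => k * s) k t := by simpa using (hasDerivAt_id t).const_mul k
  have hcos := ((hasDerivAt_cos (k * t)).comp t hk).smul hz
  have hsin := ((hasDerivAt_sin (k * t)).comp t hk).smul hz.perp
  refine (hcos.add hsin).congr_deriv ?_
  simp only [Function.comp_apply]
  rw [perp_add, perp_neg, perp_smul, perp_perp]
  module

lemma gronwallBound_le_exp_mul_add {δ K η t : ℝ} (hK : 0 ≤ K) (hη : 0 ≤ η) :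
    gronwallBound δ K η t ≤ exp (K * t) * δ + t * exp (K * t) * η := by
  rcases hK.eq_or_lt with rfl | hK
  · simp [gronwallBound_K0, mul_comm]
  rw [gronwallBound_of_K_ne_0 hK.ne']
  have hexp : exp (K * t) - 1 ≤ K * t * exp (K * t) := by
    have := mul_le_mul_of_nonneg_right (one_sub_le_exp_neg (K * t)) (exp_pos (K * t)).le
    rw [← exp_add, neg_add_cancel, exp_zero, sub_mul, one_mul] at this
    linarith
  have : η / K * (exp (K * t) - 1) ≤ t * exp (K * t) * η := by
    calc η / K * (exp (K * t) - 1) ≤ η / K * (K * t * exp (K * t)) := by gcongr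
      _ = t * exp (K * t) * η := by field_simp
  linarith [mul_comm δ (exp (K * t))]

theorem norm_le_of_hasDerivAt_neg_smul_perp_add {z r : ℝ → ℝ²} {k K η t : ℝ}
    (hK : 0 ≤ K) (hη : 0 ≤ η) (ht : 0 ≤ t)
    (hz : ∀ s, HasDerivAt z (-(k • perp (z s)) + r s) s) (hr : ∀ s, ‖r s‖ ≤ K * ‖z s‖ + η) :
    ‖z t‖ ≤ exp (K * t) * ‖z 0‖ + t * exp (K * t) * η := by
  set w := fun s => cos (k * s) • z s + sin (k * s) • perp (z s)
  have hw : ∀ s, ‖w s‖ = ‖z s‖ := fun s => norm_cos_smul_add_sin_smul_perp _ _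
  have hw' := fun s => hasDerivAt_cos_smul_add_sin_smul_perp (hz s)
  have := norm_le_gronwallBound_of_norm_deriv_right_le (a := 0) (b := t)
    (fun s _ => (hw' s).continuousAt.continuousWithinAt) (fun s _ => (hw' s).hasDerivWithinAt)
    (hw 0).le (fun s _ => by rw [norm_cos_smul_add_sin_smul_perp, hw]; exact hr s) t ⟨ht, le_rfl⟩
  rw [hw, sub_zero] at this
  exact this.trans (gronwallBound_le_exp_mul_add hK hη)

theorem hasDerivAt_comp_of_differentiableAt_uncurry {X Y : Type*} [NormedAddCommGroup X]
    [NormedSpace ℝ X] [NormedAddCommGroup Y] [NormedSpace ℝ Y] {E : ℝ → X → Y} {x : ℝ → X}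
    {x' : X} {t : ℝ} (hE : DifferentiableAt ℝ (fun p : ℝ × X => E p.1 p.2) (t, x t))
    (hx : HasDerivAt x x' t) :
    HasDerivAt (fun s => E s (x s)) (deriv (fun s => E s (x t)) t + fderiv ℝ (E t) (x t) x') t := by
  set L := fderiv ℝ (fun p : ℝ × X => E p.1 p.2) (t, x t)
  have htime : HasDerivAt (fun s => E s (x t)) (L (1, 0)) t :=
    hE.hasFDerivAt.comp_hasDerivAt (l := fun p : ℝ × X => E p.1 p.2) t
      ((hasDerivAt_id' t).prodMk (hasDerivAt_const t (x t)))
  have hspace : HasFDerivAt (E t) (L.comp (.inr ℝ ℝ X)) (x t) :=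
    hE.hasFDerivAt.comp (x t) (hasFDerivAt_prodMk_right t (x t))
  have hL : L (1, x') = L (1, 0) + L (0, x') := by
    rw [← map_add, Prod.mk_add_mk, add_zero, zero_add]
  rw [htime.deriv, hspace.fderiv]
  exact hL ▸ hE.hasFDerivAt.comp_hasDerivAt (l := fun p : ℝ × X => E p.1 p.2) t
    ((hasDerivAt_id' t).prodMk hx)

lemma hasDerivAt_add_smul_perp {ε t : ℝ} (hε : ε ≠ 0) {v e : ℝ → ℝ²} {e' : ℝ²}
    (hv : HasDerivAt v (ε⁻¹ • e t - (ε ^ 2)⁻¹ • perp (v t)) t) (he : HasDerivAt e e' t) :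
    HasDerivAt (fun s => v s + ε • perp (e s))
      (-((ε ^ 2)⁻¹ • perp (v t + ε • perp (e t))) + ε • perp e') t := by
  refine (hv.add (he.perp.const_smul ε)).congr_deriv ?_
  rw [perp_add, perp_smul, perp_perp]
  match_scalars <;> field_simp

lemma norm_smul_perp_add_le {ε Kt Kx : ℝ} (hε : 0 < ε) {a : ℝ²} {B : ℝ² →L[ℝ] ℝ²}
    (ha : ‖a‖ ≤ Kt) (hB : ‖B‖ ≤ Kx) (u : ℝ²) :
    ‖ε • perp (a + B (ε⁻¹ • u))‖ ≤ ε * Kt + Kx * ‖u‖ := by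
  have hBu : ‖B (ε⁻¹ • u)‖ ≤ Kx * (ε⁻¹ * ‖u‖) := by
    simpa [norm_smul, abs_of_pos hε] using B.le_of_opNorm_le hB (ε⁻¹ • u)
  calc ‖ε • perp (a + B (ε⁻¹ • u))‖ ≤ ε * (Kt + Kx * (ε⁻¹ * ‖u‖)) := by
        rw [norm_smul, norm_perp, norm_of_nonneg hε.le]
        gcongr
        exact (norm_add_le _ _).trans (add_le_add ha hBu)
    _ = ε * Kt + Kx * ‖u‖ := by field_simp

/-- a priori bound for the characteristics: with `E` C¹ globally bounded
together with its partial derivatives, and `(x, v)` solving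
`ε x' = v`, `ε v' = E(t,x) − v^⊥/ε`, the variable `z = v + ε E^⊥(t,x)` satisfies
`‖z(t)‖ ≤ e^{Kₓt}(‖v 0‖ + εK₀) + εt e^{Kₓt}(Kₜ + KₓK₀)` and `‖v(t)‖ ≤ ‖z(t)‖ + K₀ε`. -/
theorem stmt11 (K₀ Kt Kx ε : ℝ) (hε : 0 < ε)
    (E : ℝ → EuclideanSpace ℝ (Fin 2) → EuclideanSpace ℝ (Fin 2))
    (hE : ContDiff ℝ 1 (fun p : ℝ × EuclideanSpace ℝ (Fin 2) => E p.1 p.2))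
    (hK₀ : ∀ t x, ‖E t x‖ ≤ K₀)
    (hKt : ∀ t x, ‖fderiv ℝ (fun s => E s x) t‖ ≤ Kt)
    (hKx : ∀ t x, ‖fderiv ℝ (fun y => E t y) x‖ ≤ Kx)
    (x v : ℝ → EuclideanSpace ℝ (Fin 2))
    (hx : ∀ t, HasDerivAt x (ε⁻¹ • v t) t)
    (hv : ∀ t, HasDerivAt v (ε⁻¹ • E t (x t) - (ε ^ 2)⁻¹ • perp (v t)) t)
    (z : ℝ → EuclideanSpace ℝ (Fin 2))
    (hzdef : ∀ t, z t = v t + ε • perp (E t (x t))) :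
    ∀ t, 0 ≤ t →
      ‖z t‖ ≤ Real.exp (Kx * t) * (‖v 0‖ + ε * K₀)
          + ε * t * Real.exp (Kx * t) * (Kt + Kx * K₀) ∧
      ‖v t‖ ≤ ‖z t‖ + K₀ * ε := by
  have hK₀_nonneg : 0 ≤ K₀ := (norm_nonneg _).trans (hK₀ 0 0)
  have hKt_nonneg : 0 ≤ Kt := (norm_nonneg _).trans (hKt 0 0)
  have hKx_nonneg : 0 ≤ Kx := (norm_nonneg _).trans (hKx 0 0)
  have hεE : ∀ t, ‖ε • perp (E t (x t))‖ ≤ ε * K₀ := fun t => by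
    rw [norm_smul, norm_perp, norm_of_nonneg hε.le]; gcongr; exact hK₀ t (x t)
  have hv_le : ∀ t, ‖v t‖ ≤ ‖z t‖ + K₀ * ε := fun t => by
    have hv_eq : v t = z t - ε • perp (E t (x t)) := by rw [hzdef]; abel
    linarith [hv_eq ▸ norm_sub_le (z t) (ε • perp (E t (x t))), hεE t]
  set r := fun t => ε • perp (deriv (fun s => E s (x t)) t + fderiv ℝ (E t) (x t) (ε⁻¹ • v t))
  have hz' : ∀ t, HasDerivAt z (-((ε ^ 2)⁻¹ • perp (z t)) + r t) t := fun t => by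
    have hEx := hasDerivAt_comp_of_differentiableAt_uncurry
      ((hE.differentiable one_ne_zero) (t, x t)) (hx t)
    rw [show z = fun s => v s + ε • perp (E s (x s)) from funext hzdef]
    exact hasDerivAt_add_smul_perp hε.ne' (hv t) hEx
  have hr : ∀ t, ‖r t‖ ≤ Kx * ‖z t‖ + ε * (Kt + Kx * K₀) := fun t => by
    have htime : ‖deriv (fun s => E s (x t)) t‖ ≤ Kt :=
      norm_deriv_eq_norm_fderiv (f := fun s => E s (x t)) ▸ hKt t (x t)
    nlinarith [norm_smul_perp_add_le hε htime (hKx t (x t)) (v t), hv_le t]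
  intro t ht
  refine ⟨?_, hv_le t⟩
  calc ‖z t‖ ≤ exp (Kx * t) * ‖z 0‖ + t * exp (Kx * t) * (ε * (Kt + Kx * K₀)) :=
        norm_le_of_hasDerivAt_neg_smul_perp_add hKx_nonneg (by positivity) ht hz' hr
    _ ≤ _ := by
        rw [hzdef]
        nlinarith [norm_add_le (v 0) (ε • perp (E 0 (x 0))), hεE 0, exp_pos (Kx * t)]
end

section
/- Contraction property of the implicit first step: let E : ℝ × ℝ² → ℝ² satisfy ‖DₓE‖ ≤ K_x, let ε, Δt > 0 with K_x Δt < 1/2, and define F(y, v) = (y₀ − Δt·E^⊥(t₁, y + ε v^⊥), (Id + (Δt/ε²)J)⁻¹(v₀ + (Δt/ε)·E(t₁, y + ε v^⊥))). Then F is Lipschitz with constant at most 2K_xΔt < 1 with respect to the norm ‖(y,v)‖_ε := ‖y‖ + ε‖v‖, and hence has a unique fixed point. -/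
/-- The rotation matrix `J`. -/
def Jmat : Matrix (Fin 2) (Fin 2) ℝ := !![0, -1; 1, 0]

open scoped RealInnerProductSpace

lemma perp_sub (u v : EuclideanSpace ℝ (Fin 2)) : perp (u - v) = perp u - perp v := by
  ext i
  fin_cases i <;> simp [perp]; ring

lemma norm_perp_s17 (v : EuclideanSpace ℝ (Fin 2)) : ‖perp v‖ = ‖v‖ := by
  simp [EuclideanSpace.norm_eq, perp, Fin.sum_univ_two, add_comm]

lemma inner_self_perp (v : EuclideanSpace ℝ (Fin 2)) : ⟪v, perp v⟫ = 0 := by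
  simp only [perp, PiLp.inner_apply, RCLike.inner_apply, Real.ringHom_apply, Fin.sum_univ_two,
    Matrix.cons_val_zero, Matrix.cons_val_one, Matrix.cons_val_fin_one]
  ring

lemma toEuclideanCLM_Jmat (v : EuclideanSpace ℝ (Fin 2)) :
    Matrix.toEuclideanCLM (n := Fin 2) (𝕜 := ℝ) Jmat v = perp v := by
  ext i
  fin_cases i <;> simp [Jmat, perp, Matrix.mulVec, dotProduct, Fin.sum_univ_two]

lemma norm_le_norm_add_smul_perp (l : ℝ) (v : EuclideanSpace ℝ (Fin 2)) :
    ‖v‖ ≤ ‖v + l • perp v‖ := by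
  have h : ‖v + l • perp v‖ ^ 2 = (1 + l ^ 2) * ‖v‖ ^ 2 := by
    rw [norm_add_sq_real, inner_smul_right, inner_self_perp, norm_smul, norm_perp_s17,
      Real.norm_eq_abs, mul_pow, sq_abs]
    ring
  refine (pow_le_pow_iff_left₀ (norm_nonneg _) (norm_nonneg _) two_ne_zero).mp ?_
  rw [h]
  nlinarith [sq_nonneg l, sq_nonneg ‖v‖]

lemma isUnit_det_one_add_smul_Jmat (l : ℝ) : IsUnit (1 + l • Jmat).det := by
  have hM : (1 : Matrix (Fin 2) (Fin 2) ℝ) + l • Jmat = !![1, -l; l, 1] := by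
    ext i j
    fin_cases i <;> fin_cases j <;> simp [Jmat]
  rw [hM, Matrix.det_fin_two_of, isUnit_iff_ne_zero]
  nlinarith [sq_nonneg l]

lemma norm_toEuclideanCLM_inv_one_add_smul_Jmat_le (l : ℝ) (x : EuclideanSpace ℝ (Fin 2)) :
    ‖Matrix.toEuclideanCLM (n := Fin 2) (𝕜 := ℝ) ((1 + l • Jmat)⁻¹) x‖ ≤ ‖x‖ := by
  set y := Matrix.toEuclideanCLM (n := Fin 2) (𝕜 := ℝ) ((1 + l • Jmat)⁻¹) x
  have hx : x = y + l • perp y := by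
    rw [← toEuclideanCLM_Jmat]
    have := congrArg (fun M => Matrix.toEuclideanCLM (n := Fin 2) (𝕜 := ℝ) M x)
      (Matrix.mul_nonsing_inv _ (isUnit_det_one_add_smul_Jmat l))
    simpa [map_mul, add_smul] using this.symm
  exact hx ▸ norm_le_norm_add_smul_perp l y

lemma norm_add_smul_perp_sub_le {ε : ℝ} (hε : 0 ≤ ε)
    (p q : EuclideanSpace ℝ (Fin 2) × EuclideanSpace ℝ (Fin 2)) :
    ‖(p.1 + ε • perp p.2) - (q.1 + ε • perp q.2)‖ ≤ ‖p.1 - q.1‖ + ε * ‖p.2 - q.2‖ := by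
  have h : (p.1 + ε • perp p.2) - (q.1 + ε • perp q.2) = (p.1 - q.1) + ε • perp (p.2 - q.2) := by
    rw [perp_sub, smul_sub]
    abel
  rw [h]
  refine (norm_add_le _ _).trans_eq ?_
  rw [norm_smul, norm_perp_s17, Real.norm_of_nonneg hε]

lemma norm_sub_smul_perp_sub_sub_smul_perp (y₀ a b : EuclideanSpace ℝ (Fin 2)) (c : ℝ) :
    ‖(y₀ - c • perp a) - (y₀ - c • perp b)‖ = |c| * ‖a - b‖ := by
  rw [sub_sub_sub_cancel_left, ← smul_sub, ← perp_sub, norm_smul, norm_perp_s17, Real.norm_eq_abs,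
    norm_sub_rev]

lemma norm_toEuclideanCLM_inv_one_add_smul_Jmat_sub_le (l c : ℝ)
    (v₀ a b : EuclideanSpace ℝ (Fin 2)) :
    ‖Matrix.toEuclideanCLM (n := Fin 2) (𝕜 := ℝ) ((1 + l • Jmat)⁻¹) (v₀ + c • a)
      - Matrix.toEuclideanCLM (n := Fin 2) (𝕜 := ℝ) ((1 + l • Jmat)⁻¹) (v₀ + c • b)‖
      ≤ |c| * ‖a - b‖ := by
  rw [← map_sub, add_sub_add_left_eq_sub, ← smul_sub, ← Real.norm_eq_abs, ← norm_smul]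
  exact norm_toEuclideanCLM_inv_one_add_smul_Jmat_le l _

theorem ContractingWith.existsUnique_fixedPt {α : Type*} [MetricSpace α] [Nonempty α]
    [CompleteSpace α] {K : NNReal} {f : α → α} (hf : ContractingWith K f) : ∃! x, f x = x :=
  ⟨hf.fixedPoint f, hf.fixedPoint_isFixedPt, fun _ hx => hf.fixedPoint_unique hx⟩

section WeightedNorm

variable {E F : Type*} [NormedAddCommGroup E] [NormedAddCommGroup F] [NormedSpace ℝ F]

noncomputable def weightedL1Equiv {ε : ℝ} (hε : ε ≠ 0) : E × F ≃ WithLp 1 (E × F) :=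
  ((Equiv.refl E).prodCongr (LinearEquiv.smulOfNeZero ℝ F ε hε).toEquiv).trans
    (WithLp.equiv 1 (E × F)).symm

lemma dist_weightedL1Equiv {ε : ℝ} (hε : 0 < ε) (p q : E × F) :
    dist (weightedL1Equiv hε.ne' p) (weightedL1Equiv hε.ne' q)
      = ‖p.1 - q.1‖ + ε * ‖p.2 - q.2‖ := by
  rw [WithLp.prod_dist_eq_of_L1]
  simp [weightedL1Equiv, dist_eq_norm, ← smul_sub, norm_smul, abs_of_pos hε]

theorem existsUnique_fixedPt_of_weighted_lipschitz [CompleteSpace E] [CompleteSpace F]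
    {ε K : ℝ} (hε : 0 < ε) (hK₀ : 0 ≤ K) (hK : K < 1) (f : E × F → E × F)
    (hf : ∀ p q, ‖(f p).1 - (f q).1‖ + ε * ‖(f p).2 - (f q).2‖
      ≤ K * (‖p.1 - q.1‖ + ε * ‖p.2 - q.2‖)) :
    ∃! p, f p = p := by
  set e := weightedL1Equiv (E := E) (F := F) hε.ne'
  have hcontr : ContractingWith ⟨K, hK₀⟩ (e ∘ f ∘ e.symm) := by
    refine ⟨hK, LipschitzWith.of_dist_le_mul fun x y => ?_⟩
    have h := hf (e.symm x) (e.symm y)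
    rwa [← dist_weightedL1Equiv hε, ← dist_weightedL1Equiv hε, e.apply_symm_apply,
      e.apply_symm_apply] at h
  refine (e.existsUnique_congr fun p => ?_).mpr hcontr.existsUnique_fixedPt
  simp [e.apply_eq_iff_eq]

end WeightedNorm

/-- contraction property of the fully-implicit first step: with
`KₓΔt < 1/2`, the map `F` is Lipschitz with constant at most `2KₓΔt < 1` for the
norm `‖(y,v)‖_ε = ‖y‖ + ε‖v‖`, hence has a unique fixed point. -/
theorem stmt17 (Kx ε Δt t₁ : ℝ) (hKx : 0 ≤ Kx) (hε : 0 < ε) (hΔt : 0 < Δt)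
    (hsmall : Kx * Δt < 1 / 2)
    (E : ℝ → EuclideanSpace ℝ (Fin 2) → EuclideanSpace ℝ (Fin 2))
    (hLx : ∀ t x y, ‖E t x - E t y‖ ≤ Kx * ‖x - y‖)
    (y₀ v₀ : EuclideanSpace ℝ (Fin 2))
    (F : EuclideanSpace ℝ (Fin 2) × EuclideanSpace ℝ (Fin 2) →
        EuclideanSpace ℝ (Fin 2) × EuclideanSpace ℝ (Fin 2))
    (hF : ∀ p, F p =
      (y₀ - Δt • perp (E t₁ (p.1 + ε • perp p.2)),
       Matrix.toEuclideanCLM (n := Fin 2) (𝕜 := ℝ) ((1 + (Δt / ε ^ 2) • Jmat)⁻¹)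
         (v₀ + (Δt / ε) • E t₁ (p.1 + ε • perp p.2)))) :
    (∀ p q, ‖(F p).1 - (F q).1‖ + ε * ‖(F p).2 - (F q).2‖
        ≤ 2 * Kx * Δt * (‖p.1 - q.1‖ + ε * ‖p.2 - q.2‖)) ∧
    2 * Kx * Δt < 1 ∧
    ∃! p, F p = p := by
  have hLip : ∀ p q, ‖(F p).1 - (F q).1‖ + ε * ‖(F p).2 - (F q).2‖
      ≤ 2 * Kx * Δt * (‖p.1 - q.1‖ + ε * ‖p.2 - q.2‖) := by
    intro p q
    set Δ := E t₁ (p.1 + ε • perp p.2) - E t₁ (q.1 + ε • perp q.2)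
    have hy : ‖(F p).1 - (F q).1‖ = Δt * ‖Δ‖ := by
      rw [hF p, hF q, norm_sub_smul_perp_sub_sub_smul_perp, abs_of_pos hΔt]
    have hv : ε * ‖(F p).2 - (F q).2‖ ≤ Δt * ‖Δ‖ := by
      rw [hF p, hF q]
      calc ε * _ ≤ ε * (|Δt / ε| * ‖Δ‖) := by
            gcongr; exact norm_toEuclideanCLM_inv_one_add_smul_Jmat_sub_le _ _ _ _ _
        _ = Δt * ‖Δ‖ := by rw [abs_of_pos (by positivity)]; field_simp
    calc ‖(F p).1 - (F q).1‖ + ε * ‖(F p).2 - (F q).2‖ ≤ Δt * ‖Δ‖ + Δt * ‖Δ‖ := by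
          linarith
      _ = 2 * Δt * ‖Δ‖ := by ring
      _ ≤ 2 * Δt * (Kx * (‖p.1 - q.1‖ + ε * ‖p.2 - q.2‖)) := by
          gcongr
          exact (hLx _ _ _).trans (by gcongr; exact norm_add_smul_perp_sub_le hε.le p q)
      _ = 2 * Kx * Δt * (‖p.1 - q.1‖ + ε * ‖p.2 - q.2‖) := by ring
  have hlt : 2 * Kx * Δt < 1 := by linarith
  exact ⟨hLip, hlt, existsUnique_fixedPt_of_weighted_lipschitz hε (by positivity) hlt F hLip⟩
end
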